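/- Let n ≥ 1, let Q be an n×n real matrix with all entries strictly positive, let q₀ ∈ ℝ^n have all entries strictly positive, let g ∈ ℝ^n have all entries strictly positive, and let δ ≥ 1 be an integer. Then lim_{t→∞} (q₀ᵀQ^{t+δ}g)/(q₀ᵀQᵗg) = ρ(Q)^δ; consequently the alternative average convergence rate R‡(t) = 1 − ((q₀ᵀQ^{t+δ}g)/(q₀ᵀQᵗg))^{1/δ} converges to 1 − ρ(Q) as t → ∞. (Theorem 3, part 2: under random initialization and a positive transition submatrix, the alternative rate converges to the asymptotic average convergence rate.) -/

import Mathlib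

/-!
Write `x_t = Qᵗ g` and let `r_t ≤ R_t` be the smallest and largest Collatz–Wielandt quotients
`(Q x_t)_i / (x_t)_i`. Since `q₀ ≥ 0`, the ratio `q₀ᵀx_{t+1} / q₀ᵀx_t` lies between `r_t` and `R_t`.
Nonnegativity of `Q` makes `r_t` increasing and `R_t` decreasing, and strict positivity contracts
the gap: if `m` and `M` are the smallest and largest entries of `Q`, then
`R_{t+1} - r_{t+1} ≤ (1 - m/M)(R_t - r_t)`. So both converge to a common limit `ρ`. A limit point
of the normalised iterates `x_t / ∑ᵢ (x_t)_i` is a nonzero eigenvector for `ρ`, while every complex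
eigenvalue `μ` satisfies `|μ| ≤ R_t` (compare an eigenvector `v` with `x_t` at a coordinate
maximising `|v_i| / (x_t)_i`); hence `ρ = ρ(Q)`. The `δ`-step ratio is a product of `δ` one-step
ratios.
-/

open Matrix Filter

/-- The spectral radius of a real matrix: the supremum of the moduli of its
complex eigenvalues. -/
noncomputable def specRad (n : ℕ) (Q : Matrix (Fin n) (Fin n) ℝ) : ℝ :=
  sSup {r : ℝ | ∃ μ ∈ spectrum ℂ (Q.map Complex.ofReal), r = ‖μ‖}

open Finset Topology

section CollatzWielandt

variable {ι : Type*} [Fintype ι] (Q : Matrix ι ι ℝ)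

noncomputable def collatzMin (x : ι → ℝ) : ℝ := ⨅ i, (Q *ᵥ x) i / x i

noncomputable def collatzMax (x : ι → ℝ) : ℝ := ⨆ i, (Q *ᵥ x) i / x i

variable {Q} {x : ι → ℝ}

lemma mulVec_le_mulVec_of_nonneg (hQ : ∀ i j, 0 ≤ Q i j) {y : ι → ℝ} (hxy : x ≤ y) :
    Q *ᵥ x ≤ Q *ᵥ y :=
  fun i => dotProduct_le_dotProduct_of_nonneg_left hxy fun j => hQ i j

lemma dotProduct_pos_of_pos [Nonempty ι] {q : ι → ℝ} (hq : ∀ i, 0 < q i) (hx : ∀ i, 0 < x i) :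
    0 < q ⬝ᵥ x :=
  sum_pos (fun i _ => mul_pos (hq i) (hx i)) univ_nonempty

lemma mulVec_pos [Nonempty ι] (hQ : ∀ i j, 0 < Q i j) (hx : ∀ i, 0 < x i) (i : ι) :
    0 < (Q *ᵥ x) i :=
  dotProduct_pos_of_pos (hQ i) hx

lemma pow_mulVec_pos [Nonempty ι] [DecidableEq ι] (hQ : ∀ i j, 0 < Q i j) (hx : ∀ i, 0 < x i)
    (t : ℕ) (i : ι) :
    0 < (Q ^ t *ᵥ x) i := by
  induction t generalizing i with
  | zero => simpa using hx i
  | succ t ih => rw [pow_succ', ← mulVec_mulVec]; exact mulVec_pos hQ ih i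

lemma collatzMin_mul_le (hx : ∀ i, 0 < x i) (i : ι) : collatzMin Q x * x i ≤ (Q *ᵥ x) i :=
  (le_div_iff₀ (hx i)).1 (ciInf_le (Set.finite_range _).bddBelow i)

lemma mulVec_le_collatzMax_mul (hx : ∀ i, 0 < x i) (i : ι) : (Q *ᵥ x) i ≤ collatzMax Q x * x i :=
  (div_le_iff₀ (hx i)).1
    (le_ciSup (f := fun i => (Q *ᵥ x) i / x i) (Set.finite_range _).bddAbove i)

lemma le_collatzMin [Nonempty ι] (hx : ∀ i, 0 < x i) {c : ℝ} (h : ∀ i, c * x i ≤ (Q *ᵥ x) i) :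
    c ≤ collatzMin Q x :=
  le_ciInf fun i => (le_div_iff₀ (hx i)).2 (h i)

lemma collatzMax_le [Nonempty ι] (hx : ∀ i, 0 < x i) {C : ℝ} (h : ∀ i, (Q *ᵥ x) i ≤ C * x i) :
    collatzMax Q x ≤ C :=
  ciSup_le fun i => (div_le_iff₀ (hx i)).2 (h i)

lemma collatzMin_le_collatzMax [Nonempty ι] : collatzMin Q x ≤ collatzMax Q x :=
  ciInf_le_ciSup (Set.finite_range _).bddBelow (Set.finite_range _).bddAbove

lemma collatzMin_le_collatzMin_mulVec [Nonempty ι] (hQ : ∀ i j, 0 ≤ Q i j) (hx : ∀ i, 0 < x i)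
    (hQx : ∀ i, 0 < (Q *ᵥ x) i) : collatzMin Q x ≤ collatzMin Q (Q *ᵥ x) := by
  refine le_collatzMin hQx fun i => ?_
  simpa only [mulVec_smul, Pi.smul_apply, smul_eq_mul] using
    mulVec_le_mulVec_of_nonneg hQ (x := collatzMin Q x • x) (fun j => collatzMin_mul_le hx j) i

lemma collatzMax_mulVec_le_collatzMax [Nonempty ι] (hQ : ∀ i j, 0 ≤ Q i j) (hx : ∀ i, 0 < x i)
    (hQx : ∀ i, 0 < (Q *ᵥ x) i) : collatzMax Q (Q *ᵥ x) ≤ collatzMax Q x := by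
  refine collatzMax_le hQx fun i => ?_
  simpa only [mulVec_smul, Pi.smul_apply, smul_eq_mul] using
    mulVec_le_mulVec_of_nonneg hQ (y := collatzMax Q x • x)
      (fun j => mulVec_le_collatzMax_mul hx j) i

section Contraction

variable {m M : ℝ} (hm : 0 < m) (hmQ : ∀ i j, m ≤ Q i j) (hQM : ∀ i j, Q i j ≤ M)
include hm hmQ hQM

lemma div_mul_sum_div_mul_mulVec_le {z : ι → ℝ} (hz : 0 ≤ z) (hx : ∀ i, 0 < x i) (i : ι) :
    m / M * ((∑ j, z j) / ∑ j, x j) * (Q *ᵥ x) i ≤ (Q *ᵥ z) i := by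
  have hM : 0 < M := hm.trans_le ((hmQ i i).trans (hQM i i))
  have hS : 0 < ∑ j, x j := sum_pos (fun j _ => hx j) ⟨i, mem_univ i⟩
  have hz_le : m * ∑ j, z j ≤ (Q *ᵥ z) i := by
    rw [mul_sum]; exact sum_le_sum fun j _ => mul_le_mul_of_nonneg_right (hmQ i j) (hz j)
  have hx_le : (Q *ᵥ x) i ≤ M * ∑ j, x j := by
    rw [mul_sum]; exact sum_le_sum fun j _ => mul_le_mul_of_nonneg_right (hQM i j) (hx j).le
  have hQx : 0 ≤ (Q *ᵥ x) i := sum_nonneg fun j _ => mul_nonneg (hm.le.trans (hmQ i j)) (hx j).le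
  calc m / M * ((∑ j, z j) / ∑ j, x j) * (Q *ᵥ x) i
      ≤ m / M * ((∑ j, z j) / ∑ j, x j) * (M * ∑ j, x j) :=
        mul_le_mul_of_nonneg_left hx_le
          (by have := sum_nonneg fun j (_ : j ∈ univ) => hz j; positivity)
    _ = m * ∑ j, z j := by field_simp
    _ ≤ (Q *ᵥ z) i := hz_le

lemma le_collatzMin_mulVec [Nonempty ι] (hx : ∀ i, 0 < x i) {c : ℝ}
    (hc : ∀ i, c * x i ≤ (Q *ᵥ x) i) :
    c + m / M * ((∑ j, ((Q *ᵥ x) j - c * x j)) / ∑ j, x j) ≤ collatzMin Q (Q *ᵥ x) := by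
  refine le_collatzMin (mulVec_pos (fun i j => hm.trans_le (hmQ i j)) hx) fun i => ?_
  have h := div_mul_sum_div_mul_mulVec_le hm hmQ hQM (z := Q *ᵥ x - c • x)
    (fun j => sub_nonneg.2 (hc j)) hx i
  simp only [mulVec_sub, mulVec_smul, Pi.sub_apply, Pi.smul_apply, smul_eq_mul] at h
  linarith

lemma collatzMax_mulVec_le [Nonempty ι] (hx : ∀ i, 0 < x i) {C : ℝ}
    (hC : ∀ i, (Q *ᵥ x) i ≤ C * x i) :
    collatzMax Q (Q *ᵥ x) ≤ C - m / M * ((∑ j, (C * x j - (Q *ᵥ x) j)) / ∑ j, x j) := by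
  refine collatzMax_le (mulVec_pos (fun i j => hm.trans_le (hmQ i j)) hx) fun i => ?_
  have h := div_mul_sum_div_mul_mulVec_le hm hmQ hQM (z := C • x - Q *ᵥ x)
    (fun j => sub_nonneg.2 (hC j)) hx i
  simp only [mulVec_sub, mulVec_smul, Pi.sub_apply, Pi.smul_apply, smul_eq_mul] at h
  linarith

lemma collatzMax_sub_collatzMin_mulVec_le [Nonempty ι] (hx : ∀ i, 0 < x i) :
    collatzMax Q (Q *ᵥ x) - collatzMin Q (Q *ᵥ x) ≤
      (1 - m / M) * (collatzMax Q x - collatzMin Q x) := by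
  set r := collatzMin Q x
  set R := collatzMax Q x
  have hS : 0 < ∑ j, x j := sum_pos (fun j _ => hx j) univ_nonempty
  have hsum : (∑ j, ((Q *ᵥ x) j - r * x j)) / (∑ j, x j) +
      (∑ j, (R * x j - (Q *ᵥ x) j)) / ∑ j, x j = R - r := by
    rw [← add_div, ← sum_add_distrib, div_eq_iff hS.ne', mul_sum]
    exact sum_congr rfl fun j _ => by ring
  have hlo := le_collatzMin_mulVec hm hmQ hQM hx (collatzMin_mul_le hx)
  have hhi := collatzMax_mulVec_le hm hmQ hQM hx (mulVec_le_collatzMax_mul hx)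
  calc collatzMax Q (Q *ᵥ x) - collatzMin Q (Q *ᵥ x)
      ≤ R - r - m / M * ((∑ j, ((Q *ᵥ x) j - r * x j)) / (∑ j, x j) +
          (∑ j, (R * x j - (Q *ᵥ x) j)) / ∑ j, x j) := by linarith
    _ = (1 - m / M) * (R - r) := by rw [hsum]; ring

end Contraction

end CollatzWielandt

section PowerIteration

variable {ι : Type*} [Fintype ι] [Nonempty ι] {Q : Matrix ι ι ℝ}

lemma exists_tendsto_collatzMin_collatzMax_pow_mulVec [DecidableEq ι] (hQ : ∀ i j, 0 < Q i j)
    {g : ι → ℝ} (hg : ∀ i, 0 < g i) :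
    ∃ ρ, Tendsto (fun t : ℕ => collatzMin Q (Q ^ t *ᵥ g)) atTop (𝓝 ρ) ∧
      Tendsto (fun t : ℕ => collatzMax Q (Q ^ t *ᵥ g)) atTop (𝓝 ρ) := by
  set r := fun t : ℕ => collatzMin Q (Q ^ t *ᵥ g)
  set R := fun t : ℕ => collatzMax Q (Q ^ t *ᵥ g)
  have hx := pow_mulVec_pos hQ hg
  have hsucc : ∀ t, Q ^ (t + 1) *ᵥ g = Q *ᵥ (Q ^ t *ᵥ g) := fun t => by
    rw [pow_succ', mulVec_mulVec]
  obtain ⟨⟨i₀, j₀⟩, hmin⟩ := Finite.exists_min fun p : ι × ι => Q p.1 p.2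
  obtain ⟨⟨i₁, j₁⟩, hmax⟩ := Finite.exists_max fun p : ι × ι => Q p.1 p.2
  set m := Q i₀ j₀
  set M := Q i₁ j₁
  have hm : 0 < m := hQ i₀ j₀
  have hmQ : ∀ i j, m ≤ Q i j := fun i j => hmin (i, j)
  have hQM : ∀ i j, Q i j ≤ M := fun i j => hmax (i, j)
  have hθ : 0 ≤ 1 - m / M := sub_nonneg.2 ((div_le_one (hm.trans_le (hmQ i₁ j₁))).2 (hmQ i₁ j₁))
  have hθ' : 1 - m / M < 1 := sub_lt_self 1 (div_pos hm (hm.trans_le (hmQ i₁ j₁)))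
  have hmono : Monotone r := monotone_nat_of_le_succ fun t => by
    simp only [r, hsucc]
    exact collatzMin_le_collatzMin_mulVec (fun i j => (hQ i j).le) (hx t) (hsucc t ▸ hx (t + 1))
  have hanti : Antitone R := antitone_nat_of_succ_le fun t => by
    simp only [R, hsucc]
    exact collatzMax_mulVec_le_collatzMax (fun i j => (hQ i j).le) (hx t) (hsucc t ▸ hx (t + 1))
  have hgap : ∀ t, R t - r t ≤ (1 - m / M) ^ t * (R 0 - r 0) := by
    intro t
    induction t with
    | zero => simp
    | succ t ih =>
      calc R (t + 1) - r (t + 1) ≤ (1 - m / M) * (R t - r t) := by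
            simpa only [R, r, hsucc] using collatzMax_sub_collatzMin_mulVec_le hm hmQ hQM (hx t)
        _ ≤ (1 - m / M) * ((1 - m / M) ^ t * (R 0 - r 0)) := mul_le_mul_of_nonneg_left ih hθ
        _ = (1 - m / M) ^ (t + 1) * (R 0 - r 0) := by ring
  have hgap_zero : Tendsto (fun t => R t - r t) atTop (𝓝 0) :=
    squeeze_zero (fun t => sub_nonneg.2 collatzMin_le_collatzMax) hgap
      (by simpa using (tendsto_pow_atTop_nhds_zero_of_lt_one hθ hθ').mul_const (R 0 - r 0))
  have hr := tendsto_atTop_ciSup hmono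
    ⟨R 0, Set.forall_mem_range.2 fun t => collatzMin_le_collatzMax.trans (hanti (Nat.zero_le t))⟩
  exact ⟨_, hr, by simpa using hr.add hgap_zero⟩

lemma exists_mulVec_eq_smul_of_tendsto_collatzMin_collatzMax {x : ℕ → ι → ℝ}
    (hx : ∀ t i, 0 < x t i) {ρ : ℝ}
    (hmin : Tendsto (fun t => collatzMin Q (x t)) atTop (𝓝 ρ))
    (hmax : Tendsto (fun t => collatzMax Q (x t)) atTop (𝓝 ρ)) :
    ∃ v : ι → ℝ, v ≠ 0 ∧ Q *ᵥ v = ρ • v := by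
  have hS : ∀ t, 0 < ∑ i, x t i := fun t => sum_pos (fun i _ => hx t i) univ_nonempty
  set s := fun t => (∑ i, x t i)⁻¹
  have hs : ∀ t, 0 < s t := fun t => inv_pos.2 (hS t)
  have hy : ∀ t, s t • x t ∈ stdSimplex ℝ ι := fun t =>
    ⟨fun i => mul_nonneg (hs t).le (hx t i).le, by
      simp only [Pi.smul_apply, smul_eq_mul, ← mul_sum]; exact inv_mul_cancel₀ (hS t).ne'⟩
  obtain ⟨v, hv, φ, hφ, hlim⟩ := (isCompact_stdSimplex ℝ ι).tendsto_subseq hy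
  have hyi := tendsto_pi_nhds.1 hlim
  have hQcont : Continuous (Q *ᵥ ·) := continuous_const.matrix_mulVec continuous_id
  have hQy := tendsto_pi_nhds.1 ((hQcont.tendsto v).comp hlim)
  refine ⟨v, fun hv0 => by simpa [hv0] using hv.2, funext fun i => le_antisymm ?_ ?_⟩
  · refine le_of_tendsto_of_tendsto' (hQy i) ((hmax.comp hφ.tendsto_atTop).mul (hyi i)) fun t => ?_
    simp only [Function.comp, mulVec_smul, Pi.smul_apply, smul_eq_mul, mul_left_comm _ (s _)]
    exact mul_le_mul_of_nonneg_left (mulVec_le_collatzMax_mul (hx _) i) (hs _).le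
  · refine le_of_tendsto_of_tendsto' ((hmin.comp hφ.tendsto_atTop).mul (hyi i)) (hQy i) fun t => ?_
    simp only [Function.comp, mulVec_smul, Pi.smul_apply, smul_eq_mul, mul_left_comm _ (s _)]
    exact mul_le_mul_of_nonneg_left (collatzMin_mul_le (hx _) i) (hs _).le

end PowerIteration

section Spectrum

variable {ι : Type*} [Fintype ι] {Q : Matrix ι ι ℝ} {x : ι → ℝ}

lemma Matrix.mem_spectrum_iff_exists_mulVec_eq_smul {K : Type*} [Field K] [DecidableEq ι]
    {A : Matrix ι ι K} {μ : K} : μ ∈ spectrum K A ↔ ∃ v, v ≠ 0 ∧ A *ᵥ v = μ • v := by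
  rw [← spectrum_toLin', ← Module.End.hasEigenvalue_iff_mem_spectrum,
    Module.End.hasEigenvalue_iff, Submodule.ne_bot_iff]
  simp only [Module.End.mem_eigenspace_iff, toLin'_apply]
  exact ⟨fun ⟨v, hQv, hv⟩ => ⟨v, hv, hQv⟩, fun ⟨v, hv, hQv⟩ => ⟨v, hQv, hv⟩⟩

lemma norm_le_collatzMax_of_mulVec_eq_smul (hQ : ∀ i j, 0 ≤ Q i j) (hx : ∀ i, 0 < x i) {μ : ℂ}
    {v : ι → ℂ} (hv : v ≠ 0) (hμ : Q.map Complex.ofReal *ᵥ v = μ • v) :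
    ‖μ‖ ≤ collatzMax Q x := by
  obtain ⟨j₀, hj₀⟩ := Function.ne_iff.1 hv
  have : Nonempty ι := ⟨j₀⟩
  obtain ⟨i, hi⟩ := Finite.exists_max fun j => ‖v j‖ / x j
  have hvi : 0 < ‖v i‖ :=
    (div_pos_iff_of_pos_right (hx i)).1 ((div_pos (norm_pos_iff.2 hj₀) (hx j₀)).trans_le (hi j₀))
  have hvj : ∀ j, ‖v j‖ ≤ ‖v i‖ / x i * x j := fun j => (div_le_iff₀ (hx j)).1 (hi j)
  refine le_of_mul_le_mul_right ?_ hvi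
  calc ‖μ‖ * ‖v i‖ = ‖∑ j, (Q i j : ℂ) * v j‖ := by
        rw [← norm_mul, ← smul_eq_mul, ← Pi.smul_apply, ← hμ]; rfl
    _ ≤ ∑ j, Q i j * ‖v j‖ := (norm_sum_le _ _).trans_eq <| sum_congr rfl fun j _ => by
        rw [norm_mul, Complex.norm_of_nonneg (hQ i j)]
    _ ≤ ∑ j, Q i j * (‖v i‖ / x i * x j) :=
        sum_le_sum fun j _ => mul_le_mul_of_nonneg_left (hvj j) (hQ i j)
    _ = ‖v i‖ / x i * (Q *ᵥ x) i := by
        rw [mulVec, dotProduct, mul_sum]; exact sum_congr rfl fun j _ => by ring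
    _ ≤ ‖v i‖ / x i * (collatzMax Q x * x i) :=
        mul_le_mul_of_nonneg_left (mulVec_le_collatzMax_mul hx i) (div_pos hvi (hx i)).le
    _ = collatzMax Q x * ‖v i‖ := by field_simp [(hx i).ne']

lemma specRad_eq_of_mulVec_eq_smul {n : ℕ} {Q : Matrix (Fin n) (Fin n) ℝ} {ρ : ℝ}
    {v : Fin n → ℝ} (hv : v ≠ 0) (hQv : Q *ᵥ v = ρ • v)
    (hle : ∀ μ ∈ spectrum ℂ (Q.map Complex.ofReal), ‖μ‖ ≤ ρ) : specRad n Q = ρ := by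
  have hρ : (ρ : ℂ) ∈ spectrum ℂ (Q.map Complex.ofReal) := by
    refine mem_spectrum_iff_exists_mulVec_eq_smul.2 ⟨Complex.ofReal ∘ v, ?_, funext fun i => ?_⟩
    · contrapose! hv
      exact funext fun i => Complex.ofReal_eq_zero.1 (congrFun hv i)
    · rw [← Complex.coe_algebraMap, ← RingHom.map_mulVec]
      simp [hQv]
  have hnorm : ‖(ρ : ℂ)‖ = ρ := Complex.norm_of_nonneg ((norm_nonneg _).trans (hle _ hρ))
  exact IsGreatest.csSup_eq ⟨⟨_, hρ, hnorm.symm⟩, by rintro _ ⟨μ, hμ, rfl⟩; exact hle μ hμ⟩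

lemma specRad_nonneg {n : ℕ} (Q : Matrix (Fin n) (Fin n) ℝ) : 0 ≤ specRad n Q :=
  Real.sSup_nonneg <| by rintro _ ⟨μ, -, rfl⟩; exact norm_nonneg μ

end Spectrum

section Ratio

variable {ι : Type*} [Fintype ι] {Q : Matrix ι ι ℝ} {x q : ι → ℝ}

lemma collatzMin_le_dotProduct_mulVec_div (hx : ∀ i, 0 < x i) (hq : 0 ≤ q) (hqx : 0 < q ⬝ᵥ x) :
    collatzMin Q x ≤ q ⬝ᵥ (Q *ᵥ x) / q ⬝ᵥ x := by
  rw [le_div_iff₀ hqx, ← smul_eq_mul, ← dotProduct_smul]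
  exact dotProduct_le_dotProduct_of_nonneg_left
    (fun i => by simpa [mul_comm] using collatzMin_mul_le hx i) hq

lemma dotProduct_mulVec_div_le_collatzMax (hx : ∀ i, 0 < x i) (hq : 0 ≤ q) (hqx : 0 < q ⬝ᵥ x) :
    q ⬝ᵥ (Q *ᵥ x) / q ⬝ᵥ x ≤ collatzMax Q x := by
  rw [div_le_iff₀ hqx, ← smul_eq_mul, ← dotProduct_smul]
  exact dotProduct_le_dotProduct_of_nonneg_left
    (fun i => by simpa [mul_comm] using mulVec_le_collatzMax_mul hx i) hq

end Ratio

lemma tendsto_add_div_pow_of_tendsto_succ_div {K : Type*} [Field K] [TopologicalSpace K]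
    [ContinuousMul K] {a : ℕ → K} (ha : ∀ t, a t ≠ 0) {L : K}
    (h : Tendsto (fun t => a (t + 1) / a t) atTop (𝓝 L)) (d : ℕ) :
    Tendsto (fun t => a (t + d) / a t) atTop (𝓝 (L ^ d)) := by
  induction d with
  | zero => simpa [div_self (ha _)] using tendsto_const_nhds
  | succ d ih =>
    rw [pow_succ']
    refine ((h.comp (tendsto_add_atTop_nat d)).mul ih).congr fun t => ?_
    simp only [Function.comp, ← add_assoc]
    exact div_mul_div_cancel₀ (ha _)

theorem tendsto_dotProduct_pow_succ_mulVec_div_specRad {n : ℕ} [NeZero n]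
    {Q : Matrix (Fin n) (Fin n) ℝ} (hQ : ∀ i j, 0 < Q i j) {q g : Fin n → ℝ}
    (hq : ∀ i, 0 < q i) (hg : ∀ i, 0 < g i) :
    Tendsto (fun t : ℕ => q ⬝ᵥ (Q ^ (t + 1) *ᵥ g) / q ⬝ᵥ (Q ^ t *ᵥ g)) atTop
      (𝓝 (specRad n Q)) := by
  obtain ⟨ρ, hmin, hmax⟩ := exists_tendsto_collatzMin_collatzMax_pow_mulVec hQ hg
  have hx := pow_mulVec_pos hQ hg
  obtain ⟨v, hv, hQv⟩ := exists_mulVec_eq_smul_of_tendsto_collatzMin_collatzMax hx hmin hmax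
  have hspec : specRad n Q = ρ := specRad_eq_of_mulVec_eq_smul hv hQv fun μ hμ => by
    obtain ⟨w, hw, hQw⟩ := mem_spectrum_iff_exists_mulVec_eq_smul.1 hμ
    exact ge_of_tendsto' hmax fun t =>
      norm_le_collatzMax_of_mulVec_eq_smul (fun i j => (hQ i j).le) (hx t) hw hQw
  have hqx : ∀ t, 0 < q ⬝ᵥ (Q ^ t *ᵥ g) := fun t => dotProduct_pos_of_pos hq (hx t)
  rw [hspec]
  refine tendsto_of_tendsto_of_tendsto_of_le_of_le hmin hmax (fun t => ?_) (fun t => ?_) <;>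
    simp only [pow_succ', ← mulVec_mulVec]
  · exact collatzMin_le_dotProduct_mulVec_div (hx t) (fun i => (hq i).le) (hqx t)
  · exact dotProduct_mulVec_div_le_collatzMax (hx t) (fun i => (hq i).le) (hqx t)

/-- Theorem 3, part 2: for a strictly positive matrix `Q`, strictly positive `q₀` and
`g`, the ratio `(q₀ᵀQ^{t+δ}g)/(q₀ᵀQᵗg)` converges to `ρ(Q)^δ`, so the alternative
average convergence rate `R‡(t)` converges to `1 - ρ(Q)`. -/
theorem alternative_rate_tendsto_specRad (n : ℕ) (hn : 1 ≤ n)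
    (Q : Matrix (Fin n) (Fin n) ℝ) (hQ : ∀ i j, 0 < Q i j)
    (q₀ : Fin n → ℝ) (hq₀ : ∀ i, 0 < q₀ i)
    (g : Fin n → ℝ) (hg : ∀ i, 0 < g i)
    (δ : ℕ) (hδ : 1 ≤ δ) :
    Filter.Tendsto
      (fun t : ℕ => (q₀ ⬝ᵥ ((Q ^ (t + δ)) *ᵥ g)) / (q₀ ⬝ᵥ ((Q ^ t) *ᵥ g)))
      Filter.atTop (nhds (specRad n Q ^ δ)) ∧
    Filter.Tendsto
      (fun t : ℕ =>
        1 - ((q₀ ⬝ᵥ ((Q ^ (t + δ)) *ᵥ g)) / (q₀ ⬝ᵥ ((Q ^ t) *ᵥ g))) ^ ((1 : ℝ) / δ))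
      Filter.atTop (nhds (1 - specRad n Q)) := by
  have : NeZero n := ⟨by omega⟩
  have hpos : ∀ t, q₀ ⬝ᵥ (Q ^ t *ᵥ g) ≠ 0 := fun t =>
    (dotProduct_pos_of_pos hq₀ (pow_mulVec_pos hQ hg t)).ne'
  have hratio := tendsto_add_div_pow_of_tendsto_succ_div hpos
    (tendsto_dotProduct_pow_succ_mulVec_div_specRad hQ hq₀ hg) δ
  have hroot : (specRad n Q ^ δ) ^ ((1 : ℝ) / δ) = specRad n Q := by
    rw [one_div]; exact Real.pow_rpow_inv_natCast (specRad_nonneg Q) (by omega)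
  refine ⟨hratio, ?_⟩
  simpa only [hroot] using
    (hratio.rpow_const (Or.inr (one_div_nonneg.2 δ.cast_nonneg))).const_sub 1
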